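/- For every ε > 0, every continuously differentiable x : [0,l] → ℝ with x(0) = x(l) = 0, every y, μ₂ ∈ ℝ, and every continuously differentiable μ₁ : [0,l] → ℝ with μ₁(0) = μ₁(l) = 0, the following jump estimate holds: ∫₀ˡ (α'(z)x(z) + α(z)x'(z) + β'(z)y + μ₁'(z))² dz + (∫₀ˡ γ(z)x(z) dz + δ·y + μ₂)² ≤ (‖α²‖_∞ + (l²/π²)‖α·α''‖_∞ + (l²/π²)‖γ‖²_{L²} + ε·((l²/π²)‖α'‖_∞ + ‖α‖_∞ + (l²/π²)‖γ‖_{L²}))·‖x'‖²_{L²} + 2·((l/π)·‖α'β' + γδ‖_{L²} + ‖α·β'‖_{L²})·‖x'‖_{L²}·|y| + (‖β'‖²_{L²} + δ² + ε·(‖β'‖_{L²} + |δ|))·y² + (1 + ε⁻¹·(‖α'‖_∞ + ‖β'‖_{L²} + ‖α‖_∞))·‖μ₁'‖²_{L²} + (1 + ε⁻¹·(|δ| + ‖γ‖_{L²}))·μ₂². -/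

import Mathlib

/-!
Expanding both squares, every term is bounded by Cauchy–Schwarz and the weighted Young
inequality `2ab ≤ εa² + ε⁻¹b²`, using two facts about `x`:
* `∫ ((α x)')² = ∫ (α² x'² - α α'' x²)`, because `(α α' x²)'` integrates to zero;
* Wirtinger's inequality `‖x‖ ≤ (l/π) ‖x'‖`. With `c = π/l`,
  `(c x² cot (c z))' = x'² - c² x² - (x' - c x cot (c z))²` on `(0, l)`, and `x² cot (c z)`
  extends continuously by `0` to `[0, l]` since `x` vanishes at the simple poles of `cot (c z)`;
  integrating gives `0 ≤ ∫ (x'² - c² x²)`.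
-/

open Set Real

/-- `‖f‖_{L²}` on `[0,l]`. -/
noncomputable def L2norm (l : ℝ) (f : ℝ → ℝ) : ℝ :=
  Real.sqrt (∫ z in (0:ℝ)..l, (f z)^2)

/-- `‖f‖_∞` on `[0,l]`. -/
noncomputable def CnormInf (l : ℝ) (f : ℝ → ℝ) : ℝ :=
  sSup ((fun z => |f z|) '' Icc 0 l)

open Filter Topology intervalIntegral
open MeasureTheory (volume)

lemma L2norm_nonneg (l : ℝ) (f : ℝ → ℝ) : 0 ≤ L2norm l f :=
  Real.sqrt_nonneg _

section Norms

variable {l : ℝ}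

lemma sq_L2norm (hl : 0 ≤ l) (f : ℝ → ℝ) : L2norm l f ^ 2 = ∫ z in (0:ℝ)..l, f z ^ 2 :=
  Real.sq_sqrt (integral_nonneg hl fun z _ => sq_nonneg (f z))

lemma L2norm_mul_const (f : ℝ → ℝ) (c : ℝ) :
    L2norm l (fun z => f z * c) = L2norm l f * |c| := by
  simp only [L2norm, mul_pow, integral_mul_const]
  rw [Real.sqrt_mul' _ (sq_nonneg c), Real.sqrt_sq_eq_abs]

variable {f g : ℝ → ℝ}

lemma abs_le_CnormInf (hf : ContinuousOn f (Icc 0 l)) {z : ℝ} (hz : z ∈ Icc 0 l) :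
    |f z| ≤ CnormInf l f :=
  le_csSup (isCompact_Icc.bddAbove_image hf.abs) (mem_image_of_mem _ hz)

lemma CnormInf_nonneg (hl : 0 ≤ l) (hf : ContinuousOn f (Icc 0 l)) : 0 ≤ CnormInf l f :=
  (abs_nonneg _).trans (abs_le_CnormInf hf (left_mem_Icc.2 hl))

lemma integral_add_sq (hl : 0 ≤ l) (hf : ContinuousOn f (Icc 0 l))
    (hg : ContinuousOn g (Icc 0 l)) :
    ∫ z in (0:ℝ)..l, (f z + g z) ^ 2 =
      (∫ z in (0:ℝ)..l, f z ^ 2) + 2 * (∫ z in (0:ℝ)..l, f z * g z) +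
        ∫ z in (0:ℝ)..l, g z ^ 2 := by
  have hff : IntervalIntegrable (fun z => f z ^ 2) volume 0 l :=
    (hf.pow 2).intervalIntegrable_of_Icc hl
  have hfg : IntervalIntegrable (fun z => 2 * (f z * g z)) volume 0 l :=
    (continuousOn_const.mul (hf.mul hg)).intervalIntegrable_of_Icc hl
  have hgg : IntervalIntegrable (fun z => g z ^ 2) volume 0 l :=
    (hg.pow 2).intervalIntegrable_of_Icc hl
  rw [← integral_const_mul, ← integral_add hff hfg, ← integral_add (hff.add hfg) hgg]
  exact integral_congr fun z _ => by ring

lemma abs_integral_mul_le_L2norm_mul (hl : 0 ≤ l) (hf : ContinuousOn f (Icc 0 l))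
    (hg : ContinuousOn g (Icc 0 l)) :
    |∫ z in (0:ℝ)..l, f z * g z| ≤ L2norm l f * L2norm l g := by
  have hquad : ∀ t : ℝ, 0 ≤ (∫ z in (0:ℝ)..l, g z ^ 2) * (t * t) +
      2 * (∫ z in (0:ℝ)..l, f z * g z) * t + ∫ z in (0:ℝ)..l, f z ^ 2 := fun t => by
    have h := integral_add_sq (g := fun z => t * g z) hl hf (continuousOn_const.mul hg)
    simp only [mul_pow, mul_left_comm _ t, integral_const_mul] at h
    have h0 : 0 ≤ ∫ z in (0:ℝ)..l, (f z + t * g z) ^ 2 :=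
      integral_nonneg hl fun z _ => sq_nonneg _
    linarith
  have hdisc := discrim_le_zero hquad
  rw [discrim] at hdisc
  rw [L2norm, L2norm, ← Real.sqrt_mul (integral_nonneg hl fun z _ => sq_nonneg (f z))]
  exact Real.abs_le_sqrt (by nlinarith)

lemma L2norm_add_le (hl : 0 ≤ l) (hf : ContinuousOn f (Icc 0 l))
    (hg : ContinuousOn g (Icc 0 l)) :
    L2norm l (fun z => f z + g z) ≤ L2norm l f + L2norm l g := by
  have hfg := (le_abs_self _).trans (abs_integral_mul_le_L2norm_mul hl hf hg)
  rw [L2norm, Real.sqrt_le_left (by positivity [L2norm_nonneg l f, L2norm_nonneg l g]),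
    integral_add_sq hl hf hg, ← sq_L2norm hl f, ← sq_L2norm hl g]
  nlinarith

lemma L2norm_mul_le_CnormInf_mul (hl : 0 ≤ l) (hf : ContinuousOn f (Icc 0 l))
    (hg : ContinuousOn g (Icc 0 l)) :
    L2norm l (fun z => f z * g z) ≤ CnormInf l f * L2norm l g := by
  have hpt : ∀ z ∈ Icc 0 l, (f z * g z) ^ 2 ≤ CnormInf l f ^ 2 * g z ^ 2 := fun z hz => by
    rw [mul_pow, ← sq_abs (f z)]
    gcongr
    exact abs_le_CnormInf hf hz
  calc L2norm l (fun z => f z * g z)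
      ≤ Real.sqrt (∫ z in (0:ℝ)..l, CnormInf l f ^ 2 * g z ^ 2) :=
        Real.sqrt_le_sqrt (integral_mono_on hl (((hf.mul hg).pow 2).intervalIntegrable_of_Icc hl)
          ((continuousOn_const.mul (hg.pow 2)).intervalIntegrable_of_Icc hl) hpt)
    _ = CnormInf l f * L2norm l g := by
        rw [integral_const_mul, Real.sqrt_mul (sq_nonneg _),
          Real.sqrt_sq (CnormInf_nonneg hl hf), L2norm]

end Norms

lemma mul_le_abs_mul_of_abs_le {b c : ℝ} (a : ℝ) (h : |b| ≤ c) : a * b ≤ |a| * c :=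
  (le_abs_self _).trans (abs_mul a b ▸ mul_le_mul_of_nonneg_left h (abs_nonneg a))

lemma two_mul_mul_mul_le_mul_sq_add_inv_mul_sq {ε C : ℝ} (hε : 0 < ε) (hC : 0 ≤ C)
    (a b : ℝ) :
    2 * C * a * b ≤ ε * C * a ^ 2 + ε⁻¹ * C * b ^ 2 := by
  have h : ε * C * a ^ 2 + ε⁻¹ * C * b ^ 2 - 2 * C * a * b = C * (ε * a - b) ^ 2 / ε := by
    field_simp
    ring
  rw [← sub_nonneg, h]
  positivity

section Wirtinger

variable {c : ℝ}

lemma hasDerivAt_const_mul_sq_mul_cot {x : ℝ → ℝ} {x' z : ℝ} (hx : HasDerivAt x x' z)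
    (hs : sin (c * z) ≠ 0) :
    HasDerivAt (fun w => c * (x w ^ 2 * cos (c * w) / sin (c * w)))
      (x' ^ 2 - c ^ 2 * x z ^ 2 - (x' - c * x z * cos (c * z) / sin (c * z)) ^ 2) z := by
  have hlin : HasDerivAt (fun w => c * w) c z := by simpa using (hasDerivAt_id z).const_mul c
  refine ((((hx.fun_pow 2).fun_mul hlin.cos).fun_div hlin.sin hs).const_mul c).congr_deriv ?_
  push_cast
  field_simp
  ring

lemma continuousAt_sq_mul_cot {u : ℝ → ℝ} {u' : ℝ} (hu : HasDerivAt u u' 0) (hu0 : u 0 = 0)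
    (hc : c ≠ 0) :
    ContinuousAt (fun t => u t ^ 2 * cos (c * t) / sin (c * t)) 0 := by
  have hslope : Tendsto (fun t => u t / t) (𝓝[≠] 0) (𝓝 u') := by
    refine (hasDerivAt_iff_tendsto_slope.1 hu).congr fun t => ?_
    simp [slope_def_field, hu0]
  have hsin : Tendsto (fun t => sin (c * t) / t) (𝓝[≠] 0) (𝓝 c) := by
    have h : HasDerivAt (fun t => sin (c * t)) c 0 := by
      simpa using ((hasDerivAt_id (0:ℝ)).const_mul c).sin
    refine (hasDerivAt_iff_tendsto_slope.1 h).congr fun t => ?_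
    simp [slope_def_field]
  have hcos : Tendsto (fun t => cos (c * t)) (𝓝[≠] 0) (𝓝 1) := by
    have h : Continuous fun t => cos (c * t) := by fun_prop
    simpa using (h.tendsto 0).mono_left nhdsWithin_le_nhds
  have hid : Tendsto (fun t : ℝ => t) (𝓝[≠] 0) (𝓝 0) :=
    tendsto_id.mono_left nhdsWithin_le_nhds
  have hlim := ((hslope.pow 2).mul hcos |>.mul hid).div hsin hc
  rw [mul_zero, zero_div] at hlim
  rw [← continuousWithinAt_compl_self, ContinuousWithinAt, hu0]
  simp only [ne_eq, OfNat.ofNat_ne_zero, not_false_eq_true, zero_pow, zero_mul, zero_div]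
  refine hlim.congr' (eventually_nhdsWithin_of_forall fun t ht => ?_)
  simp only [Pi.div_apply]
  rw [div_div_eq_mul_div]
  congr 1
  field_simp [show t ≠ 0 from ht]

end Wirtinger

lemma sin_pi_div_mul_ne_zero {l z : ℝ} (hl : 0 < l) (hz : z ∈ Ioo 0 l) :
    sin (π / l * z) ≠ 0 := by
  refine (sin_pos_of_pos_of_lt_pi (mul_pos (div_pos pi_pos hl) hz.1) ?_).ne'
  calc π / l * z < π / l * l := mul_lt_mul_of_pos_left hz.2 (div_pos pi_pos hl)
    _ = π := div_mul_cancel₀ π hl.ne'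

lemma continuousOn_sq_mul_cot {l : ℝ} (hl : 0 < l) {x x' : ℝ → ℝ}
    (hx : ∀ z ∈ Icc 0 l, HasDerivAt x (x' z) z) (hx0 : x 0 = 0) (hxl : x l = 0) :
    ContinuousOn (fun w => x w ^ 2 * cos (π / l * w) / sin (π / l * w)) (Icc 0 l) := by
  have hc : π / l ≠ 0 := (div_pos pi_pos hl).ne'
  refine continuousOn_of_forall_continuousAt fun z hz => ?_
  rcases hz.1.eq_or_lt with rfl | h0
  · exact continuousAt_sq_mul_cot (hx 0 hz) hx0 hc
  rcases hz.2.eq_or_lt with hzl | hzl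
  · -- reflecting `z ↦ l - z` turns the cotangent singularity at `l` into the one at `0`
    rw [hzl]
    have hxl' : HasDerivAt x (x' l) (l - 0) := by simpa using hx l (right_mem_Icc.2 hl.le)
    have hrefl : ContinuousAt (fun t => -(x (l - t) ^ 2 * cos (π / l * t) / sin (π / l * t))) 0 :=
      (continuousAt_sq_mul_cot (hxl'.comp_const_sub l 0) (by simpa using hxl) hc).neg
    have hsub : ContinuousAt (fun w => l - w) l := by fun_prop
    convert hrefl.comp_of_eq hsub (sub_self l) using 1
    funext w
    have hcw : π / l * (l - w) = π - π / l * w := by rw [mul_sub, div_mul_cancel₀ π hl.ne']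
    simp only [Function.comp_apply, sub_sub_cancel, hcw, cos_pi_sub, sin_pi_sub]
    ring
  have := (hx z hz).continuousAt
  fun_prop (disch := exact sin_pi_div_mul_ne_zero hl ⟨h0, hzl⟩)

theorem integral_sq_le_wirtinger {l : ℝ} (hl : 0 < l) {x x' : ℝ → ℝ}
    (hx : ∀ z ∈ Icc 0 l, HasDerivAt x (x' z) z) (hx'c : ContinuousOn x' (Icc 0 l))
    (hx0 : x 0 = 0) (hxl : x l = 0) :
    ∫ z in (0:ℝ)..l, x z ^ 2 ≤ (l / π) ^ 2 * ∫ z in (0:ℝ)..l, x' z ^ 2 := by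
  set c := π / l with hc_def
  have hxc : ContinuousOn x (Icc 0 l) := HasDerivAt.continuousOn hx
  have key := sub_le_integral_of_hasDeriv_right_of_le (φ := fun z => x' z ^ 2 - c ^ 2 * x z ^ 2)
    hl.le ((continuousOn_sq_mul_cot hl hx hx0 hxl).const_mul c)
    (fun z hz => (hasDerivAt_const_mul_sq_mul_cot (hx z (Ioo_subset_Icc_self hz))
      (sin_pi_div_mul_ne_zero hl hz)).hasDerivWithinAt)
    ((hx'c.pow 2).sub (continuousOn_const.mul (hxc.pow 2))).integrableOn_Icc
    (fun z _ => sub_le_self _ (sq_nonneg _))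
  have hx'2 : IntervalIntegrable (fun z => x' z ^ 2) volume 0 l :=
    (hx'c.pow 2).intervalIntegrable_of_Icc hl.le
  have hx2 : IntervalIntegrable (fun z => c ^ 2 * x z ^ 2) volume 0 l :=
    (continuousOn_const.mul (hxc.pow 2)).intervalIntegrable_of_Icc hl.le
  rw [integral_sub hx'2 hx2, integral_const_mul] at key
  simp only [hx0, hxl, ne_eq, OfNat.ofNat_ne_zero, not_false_eq_true, zero_pow, zero_mul,
    zero_div, mul_zero, sub_zero, sub_nonneg] at key
  have hcl : (l / π) ^ 2 * c ^ 2 = 1 := by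
    rw [hc_def]; field_simp
  calc ∫ z in (0:ℝ)..l, x z ^ 2 = (l / π) ^ 2 * (c ^ 2 * ∫ z in (0:ℝ)..l, x z ^ 2) := by
        rw [← mul_assoc, hcl, one_mul]
    _ ≤ (l / π) ^ 2 * ∫ z in (0:ℝ)..l, x' z ^ 2 := by gcongr

lemma L2norm_le_wirtinger {l : ℝ} (hl : 0 < l) {x x' : ℝ → ℝ}
    (hx : ∀ z ∈ Icc 0 l, HasDerivAt x (x' z) z) (hx'c : ContinuousOn x' (Icc 0 l))
    (hx0 : x 0 = 0) (hxl : x l = 0) :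
    L2norm l x ≤ l / π * L2norm l x' := by
  rw [L2norm, L2norm, ← Real.sqrt_sq (div_pos hl pi_pos).le, ← Real.sqrt_mul (sq_nonneg _)]
  exact Real.sqrt_le_sqrt (integral_sq_le_wirtinger hl hx hx'c hx0 hxl)

section JumpEstimate

variable {l : ℝ} {α α' α'' x x' : ℝ → ℝ}

lemma integral_sq_deriv_mul_eq (hl : 0 ≤ l) (hα : ∀ z ∈ Icc 0 l, HasDerivAt α (α' z) z)
    (hα' : ∀ z ∈ Icc 0 l, HasDerivAt α' (α'' z) z) (hα''c : ContinuousOn α'' (Icc 0 l))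
    (hx : ∀ z ∈ Icc 0 l, HasDerivAt x (x' z) z) (hx'c : ContinuousOn x' (Icc 0 l))
    (hx0 : x 0 = 0) (hxl : x l = 0) :
    ∫ z in (0:ℝ)..l, (α' z * x z + α z * x' z) ^ 2 =
      ∫ z in (0:ℝ)..l, (α z ^ 2 * x' z ^ 2 - α z * α'' z * x z ^ 2) := by
  have hαc : ContinuousOn α (Icc 0 l) := HasDerivAt.continuousOn hα
  have hα'c : ContinuousOn α' (Icc 0 l) := HasDerivAt.continuousOn hα'
  have hxc : ContinuousOn x (Icc 0 l) := HasDerivAt.continuousOn hx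
  have hderiv : ∀ z ∈ uIcc 0 l, HasDerivAt (fun w => α w * α' w * x w ^ 2)
      ((α' z * x z + α z * x' z) ^ 2 - (α z ^ 2 * x' z ^ 2 - α z * α'' z * x z ^ 2)) z := by
    intro z hz
    rw [uIcc_of_le hl] at hz
    refine (((hα z hz).fun_mul (hα' z hz)).fun_mul ((hx z hz).fun_pow 2)).congr_deriv ?_
    ring
  have hint : IntervalIntegrable (fun z => (α' z * x z + α z * x' z) ^ 2) volume 0 l :=
    (((hα'c.mul hxc).add (hαc.mul hx'c)).pow 2).intervalIntegrable_of_Icc hl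
  have hint' : IntervalIntegrable (fun z => α z ^ 2 * x' z ^ 2 - α z * α'' z * x z ^ 2)
      volume 0 l :=
    (((hαc.pow 2).mul (hx'c.pow 2)).sub
      ((hαc.mul hα''c).mul (hxc.pow 2))).intervalIntegrable_of_Icc hl
  have h := integral_eq_sub_of_hasDerivAt hderiv (hint.sub hint')
  rw [integral_sub hint hint'] at h
  simp only [hx0, hxl, ne_eq, OfNat.ofNat_ne_zero, not_false_eq_true, zero_pow, mul_zero,
    sub_zero] at h
  exact sub_eq_zero.1 h

lemma integral_sq_deriv_mul_le (hl : 0 ≤ l) (hα : ∀ z ∈ Icc 0 l, HasDerivAt α (α' z) z)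
    (hα' : ∀ z ∈ Icc 0 l, HasDerivAt α' (α'' z) z) (hα''c : ContinuousOn α'' (Icc 0 l))
    (hx : ∀ z ∈ Icc 0 l, HasDerivAt x (x' z) z) (hx'c : ContinuousOn x' (Icc 0 l))
    (hx0 : x 0 = 0) (hxl : x l = 0) {r : ℝ} (hW : L2norm l x ≤ r * L2norm l x') :
    ∫ z in (0:ℝ)..l, (α' z * x z + α z * x' z) ^ 2 ≤
      (CnormInf l (fun z => α z ^ 2) + r ^ 2 * CnormInf l (fun z => α z * α'' z)) *
        L2norm l x' ^ 2 := by
  have hαc : ContinuousOn α (Icc 0 l) := HasDerivAt.continuousOn hα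
  have hxc : ContinuousOn x (Icc 0 l) := HasDerivAt.continuousOn hx
  have hα2c : ContinuousOn (fun z => α z ^ 2) (Icc 0 l) := hαc.pow 2
  have hαα''c : ContinuousOn (fun z => α z * α'' z) (Icc 0 l) := hαc.mul hα''c
  have hpt : ∀ z ∈ Icc 0 l, α z ^ 2 * x' z ^ 2 - α z * α'' z * x z ^ 2 ≤
      CnormInf l (fun z => α z ^ 2) * x' z ^ 2 + CnormInf l (fun z => α z * α'' z) * x z ^ 2 :=
    fun z hz => by
      have h1 := abs_le_CnormInf hα2c hz
      have h2 := neg_le_of_abs_le (abs_le_CnormInf hαα''c hz)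
      rw [abs_of_nonneg (sq_nonneg (α z))] at h1
      nlinarith [sq_nonneg (x' z), sq_nonneg (x z)]
  have hx'2 : IntervalIntegrable (fun z => CnormInf l (fun z => α z ^ 2) * x' z ^ 2) volume 0 l :=
    (continuousOn_const.mul (hx'c.pow 2)).intervalIntegrable_of_Icc hl
  have hx2 : IntervalIntegrable (fun z => CnormInf l (fun z => α z * α'' z) * x z ^ 2)
      volume 0 l :=
    (continuousOn_const.mul (hxc.pow 2)).intervalIntegrable_of_Icc hl
  have hbound := integral_mono_on hl
    (f := fun z => α z ^ 2 * x' z ^ 2 - α z * α'' z * x z ^ 2)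
    (((hα2c.mul (hx'c.pow 2)).sub (hαα''c.mul (hxc.pow 2))).intervalIntegrable_of_Icc hl)
    (hx'2.add hx2) hpt
  rw [integral_add hx'2 hx2, integral_const_mul, integral_const_mul, ← sq_L2norm hl,
    ← sq_L2norm hl] at hbound
  have hW2 : L2norm l x ^ 2 ≤ r ^ 2 * L2norm l x' ^ 2 := by
    rw [← mul_pow]; exact pow_le_pow_left₀ (L2norm_nonneg l x) hW 2
  rw [integral_sq_deriv_mul_eq hl hα hα' hα''c hx hx'c hx0 hxl]
  nlinarith [mul_le_mul_of_nonneg_left hW2 (CnormInf_nonneg hl hαα''c)]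

variable {β' γ : ℝ → ℝ}

lemma integral_cross_terms_eq (hl : 0 ≤ l) (hαc : ContinuousOn α (Icc 0 l))
    (hα'c : ContinuousOn α' (Icc 0 l)) (hβ'c : ContinuousOn β' (Icc 0 l))
    (hγ : ContinuousOn γ (Icc 0 l)) (hxc : ContinuousOn x (Icc 0 l))
    (hx'c : ContinuousOn x' (Icc 0 l)) (δ y : ℝ) :
    (∫ z in (0:ℝ)..l, (α' z * x z + α z * x' z) * (β' z * y)) +
        δ * y * ∫ z in (0:ℝ)..l, γ z * x z =
      y * ((∫ z in (0:ℝ)..l, (α' z * β' z + γ z * δ) * x z) +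
        ∫ z in (0:ℝ)..l, α z * β' z * x' z) := by
  have h1 : IntervalIntegrable (fun z => (α' z * x z + α z * x' z) * (β' z * y)) volume 0 l :=
    (((hα'c.mul hxc).add (hαc.mul hx'c)).mul
      (hβ'c.mul continuousOn_const)).intervalIntegrable_of_Icc hl
  have h2 : IntervalIntegrable (fun z => δ * y * (γ z * x z)) volume 0 l :=
    (continuousOn_const.mul (hγ.mul hxc)).intervalIntegrable_of_Icc hl
  have h3 : IntervalIntegrable (fun z => y * ((α' z * β' z + γ z * δ) * x z)) volume 0 l :=
    (continuousOn_const.mul (((hα'c.mul hβ'c).add (hγ.mul continuousOn_const)).mul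
      hxc)).intervalIntegrable_of_Icc hl
  have h4 : IntervalIntegrable (fun z => y * (α z * β' z * x' z)) volume 0 l :=
    (continuousOn_const.mul ((hαc.mul hβ'c).mul hx'c)).intervalIntegrable_of_Icc hl
  rw [← integral_const_mul, ← integral_add h1 h2, mul_add, ← integral_const_mul,
    ← integral_const_mul, ← integral_add h3 h4]
  exact integral_congr fun z _ => by ring

lemma jump_estimate_without_mu (hl : 0 ≤ l) (hα : ∀ z ∈ Icc 0 l, HasDerivAt α (α' z) z)
    (hα' : ∀ z ∈ Icc 0 l, HasDerivAt α' (α'' z) z) (hα''c : ContinuousOn α'' (Icc 0 l))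
    (hβ'c : ContinuousOn β' (Icc 0 l)) (hγ : ContinuousOn γ (Icc 0 l)) (δ y : ℝ)
    (hx : ∀ z ∈ Icc 0 l, HasDerivAt x (x' z) z) (hx'c : ContinuousOn x' (Icc 0 l))
    (hx0 : x 0 = 0) (hxl : x l = 0) {r : ℝ} (hW : L2norm l x ≤ r * L2norm l x') :
    (∫ z in (0:ℝ)..l, (α' z * x z + α z * x' z + β' z * y) ^ 2) +
        ((∫ z in (0:ℝ)..l, γ z * x z) + δ * y) ^ 2 ≤
      (CnormInf l (fun z => α z ^ 2) + r ^ 2 * CnormInf l (fun z => α z * α'' z) +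
          r ^ 2 * L2norm l γ ^ 2) * L2norm l x' ^ 2 +
        2 * (r * L2norm l (fun z => α' z * β' z + γ z * δ) +
          L2norm l (fun z => α z * β' z)) * L2norm l x' * |y| +
        (L2norm l β' ^ 2 + δ ^ 2) * y ^ 2 := by
  have hαc : ContinuousOn α (Icc 0 l) := HasDerivAt.continuousOn hα
  have hα'c : ContinuousOn α' (Icc 0 l) := HasDerivAt.continuousOn hα'
  have hxc : ContinuousOn x (Icc 0 l) := HasDerivAt.continuousOn hx
  have hAc : ContinuousOn (fun z => α' z * x z + α z * x' z) (Icc 0 l) :=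
    (hα'c.mul hxc).add (hαc.mul hx'c)
  have hβ'y : ContinuousOn (fun z => β' z * y) (Icc 0 l) := hβ'c.mul continuousOn_const
  have hP : |∫ z in (0:ℝ)..l, (α' z * β' z + γ z * δ) * x z| ≤
      L2norm l (fun z => α' z * β' z + γ z * δ) * (r * L2norm l x') :=
    (abs_integral_mul_le_L2norm_mul hl ((hα'c.mul hβ'c).add (hγ.mul continuousOn_const))
      hxc).trans (mul_le_mul_of_nonneg_left hW (L2norm_nonneg _ _))
  have hQ : |∫ z in (0:ℝ)..l, α z * β' z * x' z| ≤
      L2norm l (fun z => α z * β' z) * L2norm l x' :=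
    abs_integral_mul_le_L2norm_mul hl (hαc.mul hβ'c) hx'c
  have hG : |∫ z in (0:ℝ)..l, γ z * x z| ≤ L2norm l γ * (r * L2norm l x') :=
    (abs_integral_mul_le_L2norm_mul hl hγ hxc).trans
      (mul_le_mul_of_nonneg_left hW (L2norm_nonneg _ _))
  have hG2 := pow_le_pow_left₀ (abs_nonneg _) hG 2
  rw [sq_abs] at hG2
  have hcross := integral_cross_terms_eq hl hαc hα'c hβ'c hγ hxc hx'c δ y
  have hcross_le : y * ((∫ z in (0:ℝ)..l, (α' z * β' z + γ z * δ) * x z) +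
      ∫ z in (0:ℝ)..l, α z * β' z * x' z) ≤
      |y| * (L2norm l (fun z => α' z * β' z + γ z * δ) * (r * L2norm l x') +
        L2norm l (fun z => α z * β' z) * L2norm l x') :=
    mul_le_abs_mul_of_abs_le y ((abs_add_le _ _).trans (add_le_add hP hQ))
  have hβ'y2 : ∫ z in (0:ℝ)..l, (β' z * y) ^ 2 = L2norm l β' ^ 2 * y ^ 2 := by
    rw [← sq_L2norm hl, L2norm_mul_const, mul_pow, sq_abs]
  rw [integral_add_sq hl hAc hβ'y, hβ'y2]
  nlinarith [integral_sq_deriv_mul_le hl hα hα' hα''c hx hx'c hx0 hxl hW]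

lemma jump_estimate_mu_cross_terms_le (hl : 0 ≤ l) {ε : ℝ} (hε : 0 < ε)
    (hαc : ContinuousOn α (Icc 0 l)) (hα'c : ContinuousOn α' (Icc 0 l))
    (hβ'c : ContinuousOn β' (Icc 0 l)) (hγ : ContinuousOn γ (Icc 0 l))
    (hxc : ContinuousOn x (Icc 0 l)) (hx'c : ContinuousOn x' (Icc 0 l)) {μ₁' : ℝ → ℝ}
    (hμ₁'c : ContinuousOn μ₁' (Icc 0 l)) (δ y μ₂ : ℝ) {r : ℝ}
    (hW : L2norm l x ≤ r * L2norm l x') :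
    2 * (∫ z in (0:ℝ)..l, (α' z * x z + α z * x' z + β' z * y) * μ₁' z) +
        2 * (((∫ z in (0:ℝ)..l, γ z * x z) + δ * y) * μ₂) ≤
      ε * (r ^ 2 * CnormInf l α' + CnormInf l α + r ^ 2 * L2norm l γ) * L2norm l x' ^ 2 +
        ε * (L2norm l β' + |δ|) * y ^ 2 +
        ε⁻¹ * (CnormInf l α' + L2norm l β' + CnormInf l α) * L2norm l μ₁' ^ 2 +
        ε⁻¹ * (|δ| + L2norm l γ) * μ₂ ^ 2 := by
  have hα'x : ContinuousOn (fun z => α' z * x z) (Icc 0 l) := hα'c.mul hxc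
  have hαx' : ContinuousOn (fun z => α z * x' z) (Icc 0 l) := hαc.mul hx'c
  have hβ'y : ContinuousOn (fun z => β' z * y) (Icc 0 l) := hβ'c.mul continuousOn_const
  have hCα := CnormInf_nonneg hl hαc
  have hCα' := CnormInf_nonneg hl hα'c
  have hF : L2norm l (fun z => α' z * x z + α z * x' z + β' z * y) ≤
      CnormInf l α' * (r * L2norm l x') + CnormInf l α * L2norm l x' + L2norm l β' * |y| :=
    calc L2norm l (fun z => α' z * x z + α z * x' z + β' z * y)
        ≤ L2norm l (fun z => α' z * x z) + L2norm l (fun z => α z * x' z) +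
            L2norm l (fun z => β' z * y) :=
          (L2norm_add_le hl (hα'x.add hαx') hβ'y).trans
            (add_le_add_left (L2norm_add_le hl hα'x hαx') _)
      _ ≤ _ := by
          rw [L2norm_mul_const]
          gcongr
          · exact (L2norm_mul_le_CnormInf_mul hl hα'c hxc).trans
              (mul_le_mul_of_nonneg_left hW hCα')
          · exact L2norm_mul_le_CnormInf_mul hl hαc hx'c
  have hFc : ContinuousOn (fun z => α' z * x z + α z * x' z + β' z * y) (Icc 0 l) :=
    (hα'x.add hαx').add hβ'y
  have hμ₁ := (le_abs_self _).trans ((abs_integral_mul_le_L2norm_mul hl hFc hμ₁'c).trans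
    (mul_le_mul_of_nonneg_right hF (L2norm_nonneg l μ₁')))
  have hG : |∫ z in (0:ℝ)..l, γ z * x z| ≤ L2norm l γ * (r * L2norm l x') :=
    (abs_integral_mul_le_L2norm_mul hl hγ hxc).trans
      (mul_le_mul_of_nonneg_left hW (L2norm_nonneg _ _))
  have hμ₂ := mul_le_abs_mul_of_abs_le μ₂ ((abs_add_le _ _).trans
    (add_le_add hG (abs_mul δ y).le))
  have y1 := two_mul_mul_mul_le_mul_sq_add_inv_mul_sq hε hCα' (r * L2norm l x') (L2norm l μ₁')
  have y2 := two_mul_mul_mul_le_mul_sq_add_inv_mul_sq hε hCα (L2norm l x') (L2norm l μ₁')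
  have y3 := two_mul_mul_mul_le_mul_sq_add_inv_mul_sq hε (L2norm_nonneg l β') |y|
    (L2norm l μ₁')
  have y4 := two_mul_mul_mul_le_mul_sq_add_inv_mul_sq hε (L2norm_nonneg l γ)
    (r * L2norm l x') |μ₂|
  have y5 := two_mul_mul_mul_le_mul_sq_add_inv_mul_sq hε (abs_nonneg δ) |y| |μ₂|
  simp only [sq_abs] at y3 y4 y5
  linarith

end JumpEstimate

theorem stmt9_general (l : ℝ) (hl : 0 < l)
    (α α' α'' : ℝ → ℝ)
    (hα : ∀ z ∈ Icc (0:ℝ) l, HasDerivAt α (α' z) z)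
    (hα' : ∀ z ∈ Icc (0:ℝ) l, HasDerivAt α' (α'' z) z)
    (hα''c : ContinuousOn α'' (Icc 0 l))
    (β' : ℝ → ℝ)
    (hβ'c : ContinuousOn β' (Icc 0 l))
    (γ : ℝ → ℝ) (hγ : ContinuousOn γ (Icc 0 l)) (δ : ℝ)
    (ε : ℝ) (hε : 0 < ε)
    (x x' : ℝ → ℝ) (hx : ∀ z ∈ Icc (0:ℝ) l, HasDerivAt x (x' z) z)
    (hx'c : ContinuousOn x' (Icc 0 l)) (hx0 : x 0 = 0) (hxl : x l = 0)
    (y μ₂ : ℝ)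
    (μ₁' : ℝ → ℝ)
    (hμ₁'c : ContinuousOn μ₁' (Icc 0 l)) :
    (∫ z in (0:ℝ)..l, (α' z * x z + α z * x' z + β' z * y + μ₁' z)^2) +
      ((∫ z in (0:ℝ)..l, γ z * x z) + δ * y + μ₂)^2 ≤
    (CnormInf l (fun z => (α z)^2) + (l^2 / π^2) * CnormInf l (fun z => α z * α'' z) +
        (l^2 / π^2) * (L2norm l γ)^2 +
        ε * ((l^2 / π^2) * CnormInf l α' + CnormInf l α + (l^2 / π^2) * L2norm l γ)) *
      (L2norm l x')^2 +
    2 * ((l / π) * L2norm l (fun z => α' z * β' z + γ z * δ) +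
        L2norm l (fun z => α z * β' z)) * L2norm l x' * |y| +
    ((L2norm l β')^2 + δ^2 + ε * (L2norm l β' + |δ|)) * y^2 +
    (1 + ε⁻¹ * (CnormInf l α' + L2norm l β' + CnormInf l α)) * (L2norm l μ₁')^2 +
    (1 + ε⁻¹ * (|δ| + L2norm l γ)) * μ₂^2 := by
  have hαc : ContinuousOn α (Icc 0 l) := HasDerivAt.continuousOn hα
  have hα'c : ContinuousOn α' (Icc 0 l) := HasDerivAt.continuousOn hα'
  have hxc : ContinuousOn x (Icc 0 l) := HasDerivAt.continuousOn hx
  have hFc : ContinuousOn (fun z => α' z * x z + α z * x' z + β' z * y) (Icc 0 l) :=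
    ((hα'c.mul hxc).add (hαc.mul hx'c)).add (hβ'c.mul continuousOn_const)
  have hW := L2norm_le_wirtinger hl hx hx'c hx0 hxl
  have hmain := jump_estimate_without_mu hl.le hα hα' hα''c hβ'c hγ δ y hx hx'c hx0 hxl hW
  have hcross :=
    jump_estimate_mu_cross_terms_le hl.le hε hαc hα'c hβ'c hγ hxc hx'c hμ₁'c δ y μ₂ hW
  rw [integral_add_sq hl.le hFc hμ₁'c, ← sq_L2norm hl.le μ₁', ← div_pow]
  linarith

/-- jump estimate for `V(g(x,y,μ))` in the proof of Proposition 3. -/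
theorem stmt9 (l : ℝ) (hl : 0 < l)
    (α α' α'' : ℝ → ℝ)
    (hα : ∀ z ∈ Icc (0:ℝ) l, HasDerivAt α (α' z) z)
    (hα' : ∀ z ∈ Icc (0:ℝ) l, HasDerivAt α' (α'' z) z)
    (hα''c : ContinuousOn α'' (Icc 0 l))
    (β β' : ℝ → ℝ) (hβ : ∀ z ∈ Icc (0:ℝ) l, HasDerivAt β (β' z) z)
    (hβ'c : ContinuousOn β' (Icc 0 l)) (hβ0 : β 0 = 0) (hβl : β l = 0)
    (γ : ℝ → ℝ) (hγ : ContinuousOn γ (Icc 0 l)) (δ : ℝ)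
    (ε : ℝ) (hε : 0 < ε)
    (x x' : ℝ → ℝ) (hx : ∀ z ∈ Icc (0:ℝ) l, HasDerivAt x (x' z) z)
    (hx'c : ContinuousOn x' (Icc 0 l)) (hx0 : x 0 = 0) (hxl : x l = 0)
    (y μ₂ : ℝ)
    (μ₁ μ₁' : ℝ → ℝ) (hμ₁ : ∀ z ∈ Icc (0:ℝ) l, HasDerivAt μ₁ (μ₁' z) z)
    (hμ₁'c : ContinuousOn μ₁' (Icc 0 l)) (hμ₁0 : μ₁ 0 = 0) (hμ₁l : μ₁ l = 0) :
    (∫ z in (0:ℝ)..l, (α' z * x z + α z * x' z + β' z * y + μ₁' z)^2) +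
      ((∫ z in (0:ℝ)..l, γ z * x z) + δ * y + μ₂)^2 ≤
    (CnormInf l (fun z => (α z)^2) + (l^2 / π^2) * CnormInf l (fun z => α z * α'' z) +
        (l^2 / π^2) * (L2norm l γ)^2 +
        ε * ((l^2 / π^2) * CnormInf l α' + CnormInf l α + (l^2 / π^2) * L2norm l γ)) *
      (L2norm l x')^2 +
    2 * ((l / π) * L2norm l (fun z => α' z * β' z + γ z * δ) +
        L2norm l (fun z => α z * β' z)) * L2norm l x' * |y| +
    ((L2norm l β')^2 + δ^2 + ε * (L2norm l β' + |δ|)) * y^2 +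
    (1 + ε⁻¹ * (CnormInf l α' + L2norm l β' + CnormInf l α)) * (L2norm l μ₁')^2 +
    (1 + ε⁻¹ * (|δ| + L2norm l γ)) * μ₂^2 :=
  stmt9_general l hl α α' α'' hα hα' hα''c β' hβ'c γ hγ δ ε hε x x' hx hx'c hx0 hxl y μ₂ μ₁' hμ₁'c
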